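/- Every concave operator (i.e., every 2-expansion) is weakly concave. -/

import Mathlib

open ContinuousLinearMap

/-- The Cauchy dual `T' = T (T*T)⁻¹` of a left-invertible operator. -/
noncomputable def cauchyDual {H : Type*} [NormedAddCommGroup H] [InnerProductSpace ℂ H]
    [CompleteSpace H] (T : H →L[ℂ] H) : H →L[ℂ] H :=
  T * Ring.inverse (adjoint T * T)

/-- The approximate point spectrum: `z` such that `T - z·I` is not bounded below. -/
def approxPointSpectrum {H : Type*} [NormedAddCommGroup H] [InnerProductSpace ℂ H]
    [CompleteSpace H] (T : H →L[ℂ] H) : Set ℂ :=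
  {z | ¬ ∃ c : ℝ, 0 < c ∧ ∀ x : H, c * ‖x‖ ≤ ‖(T - z • (1 : H →L[ℂ] H)) x‖}

/-!
Concavity says that `n ↦ ‖Tⁿ x‖²` is a concave sequence; being nonnegative, it is nondecreasing,
so `T` is expansive and `T*T` is invertible. Testing concavity on approximate eigenvectors for `z`
gives `|z|⁴ + 1 ≤ 2|z|²`, i.e. `|z| = 1`. The Cauchy dual satisfies `⟪T' x, T y⟫ = ⟪x, y⟫`, so
`0 ≤ ‖T' y - T y‖²` reads `2‖y‖² ≤ ‖T' y‖² + ‖T y‖²`; at `y = T x` concavity turns this into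
`‖x‖ ≤ ‖T' T x‖`, while `T' T*` is the orthogonal projection onto the range of `T`, a contraction.
-/

open RCLike

open scoped InnerProductSpace

lemma le_of_concave_of_nonneg {a : ℕ → ℝ} (hconc : ∀ n, a n + a (n + 2) ≤ 2 * a (n + 1))
    (hnonneg : ∀ n, 0 ≤ a n) : a 0 ≤ a 1 := by
  have hdiff : ∀ n, a (n + 1) - a n ≤ a 1 - a 0 := by
    intro n
    induction n with
    | zero => simp
    | succ n ih => linarith [hconc n]
  have hlin : ∀ n : ℕ, a n ≤ a 0 + n * (a 1 - a 0) := by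
    intro n
    induction n with
    | zero => simp
    | succ n ih => push_cast; linarith [hdiff n]
  by_contra! h
  obtain ⟨n, hn⟩ := exists_nat_gt (a 0 / (a 0 - a 1))
  rw [div_lt_iff₀ (by linarith)] at hn
  linarith [hlin n, hnonneg n]

lemma abs_norm_sq_sub_norm_sq_le {E : Type*} [SeminormedAddCommGroup E] (p q : E) :
    |‖p‖ ^ 2 - ‖q‖ ^ 2| ≤ ‖p - q‖ * (‖p‖ + ‖q‖) := by
  rw [sq_sub_sq, abs_mul, abs_of_nonneg (by positivity : 0 ≤ ‖p‖ + ‖q‖), mul_comm]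
  exact mul_le_mul_of_nonneg_right (abs_norm_sub_norm_le p q) (by positivity)

section Concave

variable {H : Type*} [NormedAddCommGroup H] [InnerProductSpace ℂ H] {T : H →L[ℂ] H}

lemma norm_sq_add_norm_sq_le_of_isPositive [CompleteSpace H]
    (hconc : (2 • (adjoint T * T) - 1 - (adjoint T) ^ 2 * T ^ 2).IsPositive) (y : H) :
    ‖T (T y)‖ ^ 2 + ‖y‖ ^ 2 ≤ 2 * ‖T y‖ ^ 2 := by
  have h := hconc.re_inner_nonneg_left y
  have hT2 : ‖T (T y)‖ ^ 2 = re ⟪(adjoint T ^ 2 * T ^ 2) y, y⟫_ℂ := by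
    simp only [sq, mul_apply_eq_comp, adjoint_inner_left, inner_self_eq_norm_sq]
  have hT : ‖T y‖ ^ 2 = re ⟪(adjoint T * T) y, y⟫_ℂ := by
    rw [mul_apply_eq_comp, adjoint_inner_left, inner_self_eq_norm_sq]
  simp only [sub_apply, two_smul, add_apply, one_apply_eq_self, inner_sub_left,
    inner_add_left, map_sub, map_add, inner_self_eq_norm_sq] at h
  linarith

lemma le_norm_apply_of_concave (hconc : ∀ y, ‖T (T y)‖ ^ 2 + ‖y‖ ^ 2 ≤ 2 * ‖T y‖ ^ 2) (x : H) :
    ‖x‖ ≤ ‖T x‖ := by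
  have hpow : ∀ n, (T ^ (n + 1)) x = T ((T ^ n) x) := fun n => by rw [pow_succ', mul_apply_eq_comp]
  have h := le_of_concave_of_nonneg (a := fun n => ‖(T ^ n) x‖ ^ 2)
    (fun n => by simpa only [hpow, add_comm] using hconc ((T ^ n) x)) (fun n => by positivity)
  simp only [pow_zero, one_apply_eq_self, pow_one] at h
  exact le_of_sq_le_sq h (norm_nonneg _)

lemma sq_norm_sq_sub_one_mul_norm_sq_le_of_concave
    (hconc : ∀ y, ‖T (T y)‖ ^ 2 + ‖y‖ ^ 2 ≤ 2 * ‖T y‖ ^ 2) (z : ℂ) (x : H) :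
    (‖z‖ ^ 2 - 1) ^ 2 * ‖x‖ ^ 2 ≤
      (‖T‖ + ‖z‖) * (2 + ‖T‖ ^ 2 + ‖z‖ ^ 2) * ‖T x - z • x‖ * ‖x‖ := by
  set δ := ‖T x - z • x‖
  have hTx : ‖T x‖ ≤ ‖T‖ * ‖x‖ := T.le_opNorm x
  have hTTx : ‖T (T x)‖ ≤ ‖T‖ ^ 2 * ‖x‖ := by
    rw [sq, mul_assoc]; exact (T.le_opNorm _).trans (by gcongr)
  have hTTx_sub : ‖T (T x) - z ^ 2 • x‖ ≤ (‖T‖ + ‖z‖) * δ := by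
    have : T (T x) - z ^ 2 • x = T (T x - z • x) + z • (T x - z • x) := by
      rw [map_sub, map_smul, smul_sub, sq, mul_smul]; abel
    rw [this, add_mul]
    exact (norm_add_le _ _).trans (add_le_add (T.le_opNorm _) (norm_smul_le _ _))
  have hTx_sq : ‖T x‖ ^ 2 - ‖z • x‖ ^ 2 ≤ δ * ((‖T‖ + ‖z‖) * ‖x‖) := by
    refine ((le_abs_self _).trans (abs_norm_sq_sub_norm_sq_le (T x) (z • x))).trans ?_
    rw [norm_smul]
    gcongr
    linarith
  have hTTx_sq : ‖z ^ 2 • x‖ ^ 2 - ‖T (T x)‖ ^ 2 ≤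
      (‖T‖ + ‖z‖) * δ * ((‖T‖ ^ 2 + ‖z‖ ^ 2) * ‖x‖) := by
    refine ((le_abs_self _).trans (abs_norm_sq_sub_norm_sq_le (z ^ 2 • x) (T (T x)))).trans ?_
    rw [norm_sub_rev, norm_smul, norm_pow]
    exact mul_le_mul hTTx_sub (by linarith) (by positivity) (by positivity)
  rw [norm_smul] at hTx_sq
  rw [norm_smul, norm_pow] at hTTx_sq
  -- `-(‖z‖² - 1)²‖x‖²` is the concavity defect of `z • 1` at `x`; compare it with that of `T`.
  linear_combination 2 * hTx_sq + hTTx_sq + hconc x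

lemma approxPointSpectrum_subset_sphere_of_concave [CompleteSpace H]
    (hconc : ∀ y, ‖T (T y)‖ ^ 2 + ‖y‖ ^ 2 ≤ 2 * ‖T y‖ ^ 2) :
    approxPointSpectrum T ⊆ Metric.sphere (0 : ℂ) 1 := by
  intro z hz
  rw [mem_sphere_zero_iff_norm]
  by_contra hz1
  set C := (‖T‖ + ‖z‖) * (2 + ‖T‖ ^ 2 + ‖z‖ ^ 2)
  have hc : (‖z‖ ^ 2 - 1) ^ 2 ≠ 0 := pow_ne_zero 2 <| sub_ne_zero.mpr <|
    (pow_eq_one_iff_of_nonneg (norm_nonneg z) two_ne_zero).not.mpr hz1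
  refine hz ⟨(‖z‖ ^ 2 - 1) ^ 2 / (C + 1), by positivity, fun x => ?_⟩
  rw [sub_apply, smul_apply, one_apply_eq_self, div_mul_eq_mul_div, div_le_iff₀ (by positivity)]
  rcases (norm_nonneg x).eq_or_lt with hx | hx
  · rw [← hx, mul_zero]
    positivity
  · have hbound : (‖z‖ ^ 2 - 1) ^ 2 * ‖x‖ ≤ C * ‖T x - z • x‖ := by
      refine le_of_mul_le_mul_right ?_ hx
      linarith [sq_norm_sq_sub_one_mul_norm_sq_le_of_concave hconc z x]
    nlinarith [norm_nonneg (T x - z • x)]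

section CauchyDual

variable [CompleteSpace H]

lemma isUnit_adjoint_mul_self_of_le_norm (h : ∀ x, ‖x‖ ≤ ‖T x‖) : IsUnit (adjoint T * T) := by
  refine isUnit_of_forall_le_norm_inner_map _ (c := 1) one_pos fun x => ?_
  rw [mul_apply_eq_comp, adjoint_inner_left, inner_self_eq_norm_sq_to_K, norm_pow, norm_ofReal,
    abs_norm, NNReal.coe_one, mul_one]
  exact pow_le_pow_left₀ (norm_nonneg x) (h x) 2

lemma adjoint_apply_apply_inverse_apply (hT : IsUnit (adjoint T * T)) (x : H) :
    adjoint T (T (Ring.inverse (adjoint T * T) x)) = x := by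
  simpa only [mul_apply_eq_comp, one_apply_eq_self] using
    congr($(Ring.mul_inverse_cancel _ hT) x)

lemma inner_cauchyDual_apply_apply (hT : IsUnit (adjoint T * T)) (x y : H) :
    ⟪cauchyDual T x, T y⟫_ℂ = ⟪x, y⟫_ℂ := by
  rw [cauchyDual, mul_apply_eq_comp, ← adjoint_inner_left, adjoint_apply_apply_inverse_apply hT]

lemma two_mul_norm_sq_le_norm_cauchyDual_sq_add_norm_sq (hT : IsUnit (adjoint T * T)) (y : H) :
    2 * ‖y‖ ^ 2 ≤ ‖cauchyDual T y‖ ^ 2 + ‖T y‖ ^ 2 := by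
  have h := norm_sub_sq (𝕜 := ℂ) (cauchyDual T y) (T y)
  rw [inner_cauchyDual_apply_apply hT, inner_self_eq_norm_sq] at h
  linarith [sq_nonneg ‖cauchyDual T y - T y‖]

lemma norm_cauchyDual_adjoint_apply_le (hT : IsUnit (adjoint T * T)) (x : H) :
    ‖cauchyDual T (adjoint T x)‖ ≤ ‖x‖ := by
  set u := cauchyDual T (adjoint T x) with hu
  have hinner : ⟪u, u⟫_ℂ = ⟪x, u⟫_ℂ := by
    nth_rewrite 2 [hu]
    rw [cauchyDual, mul_apply_eq_comp, inner_cauchyDual_apply_apply hT, adjoint_inner_left]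
    rfl
  have h : ‖u‖ ^ 2 ≤ ‖x‖ * ‖u‖ := by
    rw [← inner_self_eq_norm_sq (𝕜 := ℂ), hinner]
    exact re_inner_le_norm x u
  nlinarith [norm_nonneg u, norm_nonneg x]

lemma le_norm_cauchyDual_apply_of_concave
    (hconc : ∀ y, ‖T (T y)‖ ^ 2 + ‖y‖ ^ 2 ≤ 2 * ‖T y‖ ^ 2) (hT : IsUnit (adjoint T * T)) (x : H) :
    ‖x‖ ≤ ‖cauchyDual T (T x)‖ := by
  refine le_of_sq_le_sq ?_ (norm_nonneg _)
  linarith [two_mul_norm_sq_le_norm_cauchyDual_sq_add_norm_sq hT (T x), hconc x]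

end CauchyDual

end Concave

theorem stmt_4 {H : Type*} [NormedAddCommGroup H] [InnerProductSpace ℂ H] [CompleteSpace H]
    (T : H →L[ℂ] H)
    (hconc : (2 • (adjoint T * T) - 1 - (adjoint T) ^ 2 * T ^ 2).IsPositive) :
    (∃ L : H →L[ℂ] H, L * T = 1) ∧
    approxPointSpectrum T ⊆ Metric.sphere (0 : ℂ) 1 ∧
    (∀ x : H, ‖x‖ ≤ ‖T x‖) ∧
    (∀ x : H, ‖(cauchyDual T * adjoint T) x‖ ≤ ‖(cauchyDual T * T) x‖) := by
  have hnorm := norm_sq_add_norm_sq_le_of_isPositive hconc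
  have hexp := le_norm_apply_of_concave hnorm
  have hT := isUnit_adjoint_mul_self_of_le_norm hexp
  refine ⟨⟨Ring.inverse (adjoint T * T) * adjoint T, ?_⟩,
    approxPointSpectrum_subset_sphere_of_concave hnorm, hexp, fun x => ?_⟩
  · rw [mul_assoc, Ring.inverse_mul_cancel _ hT]
  · rw [mul_apply_eq_comp, mul_apply_eq_comp]
    exact (norm_cauchyDual_adjoint_apply_le hT x).trans
      (le_norm_cauchyDual_apply_of_concave hnorm hT x)
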